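/- Let f : ℝⁿ → ℝ be D-Lipschitz with D ≥ 0, and let μ > 0. Then for all x, x' ∈ ℝⁿ, the gradient-free oracle satisfies the mean Lipschitz bound ∫ ‖π_x(ξ) − π_{x'}(ξ)‖ dγ(ξ) ≤ (2·D·√n/μ)·‖x − x'‖. -/

import Mathlib

/-
The two oracles at `x` and `x'` are multiples of the same direction `ξ`, and the difference of
the scalars is a second difference of `f` divided by `μ`; applying the Lipschitz bound twice
gives `‖π_x(ξ) - π_{x'}(ξ)‖ ≤ (2D‖x - x'‖/μ) ‖ξ‖`. It remains to integrate, using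
`E‖ξ‖ ≤ √(E‖ξ‖²) = √n` for the standard Gaussian.
-/

open MeasureTheory ProbabilityTheory

/-- The standard Gaussian measure on `ℝⁿ` (Euclidean space), the product over the `n`
coordinates of the real Gaussian measure with mean 0 and variance 1. -/
noncomputable def stdGaussian (n : ℕ) : Measure (EuclideanSpace ℝ (Fin n)) :=
  (Measure.pi fun _ : Fin n => gaussianReal 0 1).map
    (MeasurableEquiv.toLp 2 (Fin n → ℝ))

/-- The gradient-free oracle of `f` at `x` (with smoothing parameter `μ`) in the random
direction `ξ`. -/
noncomputable def oracle {n : ℕ} (f : EuclideanSpace ℝ (Fin n) → ℝ) (μ : ℝ)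
    (x ξ : EuclideanSpace ℝ (Fin n)) : EuclideanSpace ℝ (Fin n) :=
  ((f (x + μ • ξ) - f x) / μ) • ξ

lemma integral_sq_gaussianReal_zero (v : NNReal) : ∫ x, x ^ 2 ∂gaussianReal 0 v = v := by
  rw [← variance_fun_id_gaussianReal (μ := 0),
    variance_of_integral_eq_zero aemeasurable_id' integral_id_gaussianReal]

lemma integral_le_sqrt_integral_sq {Ω : Type*} [MeasurableSpace Ω] {P : Measure Ω}
    [IsProbabilityMeasure P] {X : Ω → ℝ} (hX : MemLp X 2 P) :
    ∫ ω, X ω ∂P ≤ √(∫ ω, X ω ^ 2 ∂P) := by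
  refine Real.le_sqrt_of_sq_le (sub_nonneg.mp ?_)
  simpa [variance_eq_sub hX] using variance_nonneg X P

lemma integral_norm_sq_stdGaussian_euclideanSpace {ι : Type*} [Fintype ι] :
    ∫ x, ‖x‖ ^ 2 ∂ProbabilityTheory.stdGaussian (EuclideanSpace ℝ ι) = Fintype.card ι := by
  rw [← map_pi_eq_stdGaussian, integral_map (by fun_prop) (by fun_prop)]
  simp_rw [EuclideanSpace.real_norm_sq_eq]
  rw [integral_finsetSum]
  · simp [integral_comp_eval (μ := fun _ : ι => gaussianReal 0 1) (f := fun x : ℝ => x ^ 2)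
      (by fun_prop), integral_sq_gaussianReal_zero]
  · exact fun i _ => integrable_comp_eval (μ := fun _ : ι => gaussianReal 0 1)
      (f := fun x : ℝ => x ^ 2) (memLp_id_gaussianReal 2).integrable_sq

section StdGaussian

variable {E : Type*} [NormedAddCommGroup E] [InnerProductSpace ℝ E] [FiniteDimensional ℝ E]
  [MeasurableSpace E] [BorelSpace E]

lemma integral_norm_sq_stdGaussian :
    ∫ x, ‖x‖ ^ 2 ∂ProbabilityTheory.stdGaussian E = Module.finrank ℝ E := by
  let e := (stdOrthonormalBasis ℝ E).repr
  rw [← stdGaussian_map e.symm, integral_map (by fun_prop) (by fun_prop)]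
  simp_rw [LinearIsometryEquiv.norm_map]
  simp [integral_norm_sq_stdGaussian_euclideanSpace]

lemma integral_norm_stdGaussian_le :
    ∫ x, ‖x‖ ∂ProbabilityTheory.stdGaussian E ≤ √(Module.finrank ℝ E) := by
  rw [← integral_norm_sq_stdGaussian]
  exact integral_le_sqrt_integral_sq IsGaussian.memLp_two_id.norm

end StdGaussian

lemma stdGaussian_eq_stdGaussian_euclideanSpace (n : ℕ) :
    stdGaussian n = ProbabilityTheory.stdGaussian (EuclideanSpace ℝ (Fin n)) :=
  map_pi_eq_stdGaussian

lemma abs_sub_sub_sub_le_of_lipschitz {F : Type*} [SeminormedAddCommGroup F] {f : F → ℝ} {D : ℝ}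
    (hlip : ∀ x y : F, |f x - f y| ≤ D * ‖x - y‖) (x x' h : F) :
    |(f (x + h) - f x) - (f (x' + h) - f x')| ≤ 2 * D * ‖x - x'‖ := by
  have hshift := hlip (x + h) (x' + h)
  rw [add_sub_add_right_eq_sub] at hshift
  calc |(f (x + h) - f x) - (f (x' + h) - f x')|
      = |(f (x + h) - f (x' + h)) - (f x - f x')| := by rw [sub_sub_sub_comm]
    _ ≤ |f (x + h) - f (x' + h)| + |f x - f x'| := abs_sub _ _
    _ ≤ 2 * D * ‖x - x'‖ := by linarith [hlip x x']

section Oracle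

variable {n : ℕ} {f : EuclideanSpace ℝ (Fin n) → ℝ} {D : ℝ}

lemma norm_oracle_sub_oracle_le (hlip : ∀ x y, |f x - f y| ≤ D * ‖x - y‖) (μ : ℝ)
    (x x' ξ : EuclideanSpace ℝ (Fin n)) :
    ‖oracle f μ x ξ - oracle f μ x' ξ‖ ≤ 2 * D * ‖x - x'‖ / |μ| * ‖ξ‖ := by
  rw [oracle, oracle, ← sub_smul, div_sub_div_same, norm_smul, Real.norm_eq_abs, abs_div]
  gcongr
  exact abs_sub_sub_sub_le_of_lipschitz hlip x x' (μ • ξ)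

lemma integral_norm_oracle_sub_oracle_le {P : Measure (EuclideanSpace ℝ (Fin n))}
    (hP : Integrable (fun ξ => ‖ξ‖) P) (hlip : ∀ x y, |f x - f y| ≤ D * ‖x - y‖) (μ : ℝ)
    (x x' : EuclideanSpace ℝ (Fin n)) :
    ∫ ξ, ‖oracle f μ x ξ - oracle f μ x' ξ‖ ∂P ≤ 2 * D * ‖x - x'‖ / |μ| * ∫ ξ, ‖ξ‖ ∂P := by
  rw [← integral_const_mul]
  exact integral_mono_of_nonneg (ae_of_all _ fun ξ => norm_nonneg _) (hP.const_mul _)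
    (ae_of_all _ (norm_oracle_sub_oracle_le hlip μ x x'))

end Oracle

theorem stmt7_general (n : ℕ) (f : EuclideanSpace ℝ (Fin n) → ℝ) (D : ℝ) (hD : 0 ≤ D)
    (hlip : ∀ x y : EuclideanSpace ℝ (Fin n), |f x - f y| ≤ D * ‖x - y‖)
    (μ : ℝ) (hμ : 0 < μ) :
    ∀ x x' : EuclideanSpace ℝ (Fin n),
      (∫ ξ, ‖oracle f μ x ξ - oracle f μ x' ξ‖ ∂(stdGaussian n))
        ≤ (2 * D * Real.sqrt n / μ) * ‖x - x'‖ := by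
  intro x x'
  rw [stdGaussian_eq_stdGaussian_euclideanSpace]
  calc ∫ ξ, ‖oracle f μ x ξ - oracle f μ x' ξ‖ ∂ProbabilityTheory.stdGaussian _
      ≤ 2 * D * ‖x - x'‖ / |μ| * ∫ ξ, ‖ξ‖ ∂ProbabilityTheory.stdGaussian _ :=
        integral_norm_oracle_sub_oracle_le IsGaussian.integrable_id.norm hlip μ x x'
    _ ≤ 2 * D * ‖x - x'‖ / |μ| * √n := by
        gcongr
        simpa using integral_norm_stdGaussian_le (E := EuclideanSpace ℝ (Fin n))
    _ = 2 * D * √n / μ * ‖x - x'‖ := by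
        rw [abs_of_pos hμ]
        ring

theorem stmt7 (n : ℕ) (hn : 1 ≤ n) (f : EuclideanSpace ℝ (Fin n) → ℝ) (D : ℝ) (hD : 0 ≤ D)
    (hlip : ∀ x y : EuclideanSpace ℝ (Fin n), |f x - f y| ≤ D * ‖x - y‖)
    (μ : ℝ) (hμ : 0 < μ) :
    ∀ x x' : EuclideanSpace ℝ (Fin n),
      (∫ ξ, ‖oracle f μ x ξ - oracle f μ x' ξ‖ ∂(stdGaussian n))
        ≤ (2 * D * Real.sqrt n / μ) * ‖x - x'‖ :=
  stmt7_general n f D hD hlip μ hμ
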